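/- arXiv:1809.06766 — 4 statements merged into one kernel-verified Lean document; each statement's English description precedes it below -/
import Mathlib

section
/- The equivalence relation ≃_𝒜 on lists is a congruence for stable sorting: if l₁ ≃_𝒜 l₂ then sort^i_a(l₁) ≃_𝒜 sort^i_a(l₂) for any a ∈ 𝒜. -/
namespace List

variable {α β : Type*} {R : α → β → Prop}

theorem forall₂_map_fst_map_snd_iff {z : List (α × β)} :
    Forall₂ R (z.map Prod.fst) (z.map Prod.snd) ↔ ∀ p ∈ z, R p.1 p.2 := by
  rw [forall₂_map_left_iff, forall₂_map_right_iff, forall₂_same]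

theorem Forall₂.mergeSort {s : α → α → Bool} {t : β → β → Bool}
    (hst : ∀ x₁ y₁ x₂ y₂, R x₁ y₁ → R x₂ y₂ → s x₁ x₂ = t y₁ y₂)
    {l₁ : List α} {l₂ : List β} (h : Forall₂ R l₁ l₂) :
    Forall₂ R (l₁.mergeSort s) (l₂.mergeSort t) := by
  obtain ⟨hlen, hzip⟩ := forall₂_iff_zip.mp h
  -- Sort the zipped list by the first components; its two projections are the two sorted lists.
  set sorted := (l₁.zip l₂).mergeSort fun p q => s p.1 q.1
  have hfst : sorted.map Prod.fst = l₁.mergeSort s := by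
    rw [map_mergeSort (f := Prod.fst) (s := s) fun _ _ _ _ => rfl, map_fst_zip hlen.le]
  have hsnd : sorted.map Prod.snd = l₂.mergeSort t := by
    rw [map_mergeSort (f := Prod.snd) (s := t) fun _ hp _ hq => hst _ _ _ _ (hzip hp) (hzip hq),
      map_snd_zip hlen.ge]
  rw [← hfst, ← hsnd, forall₂_map_fst_map_snd_iff]
  exact fun p hp => hzip (mem_mergeSort.mp hp)

end List

theorem sort_congr_of_equiv {X V : Type*} [LinearOrder V] (𝒜 : Set (X → V))
    (a : X → V) (ha : a ∈ 𝒜) (l₁ l₂ : List X)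
    (h : List.Forall₂ (fun x y => ∀ b ∈ 𝒜, b x = b y) l₁ l₂) :
    List.Forall₂ (fun x y => ∀ b ∈ 𝒜, b x = b y)
      (List.mergeSort l₁ (fun x y => decide (a x ≤ a y)))
      (List.mergeSort l₂ (fun x y => decide (a x ≤ a y))) :=
  h.mergeSort fun _ _ _ _ h₁ h₂ => by rw [h₁ a ha, h₂ a ha]
end

section
/- Soundness of a filter-then-sort procedure: let P = sort^i_a ∘ filter_{b ≥ v}. Define x ⪰_P y iff there exists a list l containing both x and y such that in l' = P(l), either y does not occur in l', or every occurrence of y in l' is preceded by an occurrence of x. Then x ⪰_P y holds if and only if ¬(b(y) ≥ v) ∨ (b(x) ≥ v ∧ a(x) ≤ a(y)). -/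
/-!
If `y` survives the filter, the condition forces `x` to occur before `y` in the sorted output,
so `x` survives the filter as well, and sortedness gives `a x ≤ a y`. Conversely, the two-element
list `[x, y]` is a witness: either `y` is filtered out, or the output is `[x, y]` itself, since
that list is already sorted and merge sort leaves sorted lists unchanged.
-/

namespace List

variable {α : Type*}

def AlwaysPrecedes (l : List α) (x y : α) : Prop :=
  ∀ j : ℕ, l[j]? = some y → ∃ i < j, l[i]? = some x

theorem alwaysPrecedes_of_not_mem {l : List α} {y : α} (hy : y ∉ l) (x : α) :
    l.AlwaysPrecedes x y :=
  fun j hj => absurd (mem_iff_getElem?.mpr ⟨j, hj⟩) hy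

theorem alwaysPrecedes_pair {x y : α} (hxy : x ≠ y) : [x, y].AlwaysPrecedes x y
  | 0, h => absurd (Option.some_injective _ h) hxy
  | 1, _ => ⟨0, Nat.zero_lt_one, rfl⟩
  | _ + 2, h => by simp at h

theorem AlwaysPrecedes.exists_lt {l : List α} {x y : α} (h : l.AlwaysPrecedes x y)
    (hy : y ∈ l) :
    ∃ (i j : ℕ) (hi : i < l.length) (hj : j < l.length), i < j ∧ l[i] = x ∧ l[j] = y := by
  obtain ⟨j, hj⟩ := mem_iff_getElem?.mp hy
  obtain ⟨i, hij, hi⟩ := h j hj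
  obtain ⟨hi_lt, rfl⟩ := getElem?_eq_some_iff.mp hi
  obtain ⟨hj_lt, rfl⟩ := getElem?_eq_some_iff.mp hj
  exact ⟨i, j, hi_lt, hj_lt, hij, rfl, rfl⟩

theorem AlwaysPrecedes.mem {l : List α} {x y : α} (h : l.AlwaysPrecedes x y) (hy : y ∈ l) :
    x ∈ l := by
  obtain ⟨i, -, hi, -, -, rfl, -⟩ := h.exists_lt hy
  exact getElem_mem hi

theorem Pairwise.rel_of_alwaysPrecedes {r : α → α → Prop} {l : List α} {x y : α}
    (hl : l.Pairwise r) (h : l.AlwaysPrecedes x y) (hy : y ∈ l) : r x y := by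
  obtain ⟨i, j, hi, hj, hij, rfl, rfl⟩ := h.exists_lt hy
  exact pairwise_iff_getElem.mp hl i j hi hj hij

theorem pairwise_mergeSort_on {β : Type*} [LinearOrder β] (f : α → β) (l : List α) :
    (l.mergeSort fun p q => decide (f p ≤ f q)).Pairwise fun p q => f p ≤ f q := by
  simpa using pairwise_mergeSort (le := fun p q => decide (f p ≤ f q))
    (fun _ _ _ h₁ h₂ => by simpa using (of_decide_eq_true h₁).trans (of_decide_eq_true h₂))
    (fun p q => by simpa using le_total (f p) (f q)) l

end List

open List

theorem soundness_filter_sort {X V : Type*} [LinearOrder V] (a b : X → V) (v : V)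
    (x y : X) (hxy : x ≠ y) :
    (∃ l : List X, x ∈ l ∧ y ∈ l ∧
      (let l' := List.mergeSort (List.filter (fun z => decide (v ≤ b z)) l)
        (fun p q => decide (a p ≤ a q));
       ∀ j : ℕ, l'[j]? = some y → ∃ i < j, l'[i]? = some x)) ↔
    (¬ (v ≤ b y) ∨ (v ≤ b x ∧ a x ≤ a y)) := by
  have mem_output {l : List X} {z : X} :
      z ∈ (l.filter fun z => decide (v ≤ b z)).mergeSort (fun p q => decide (a p ≤ a q)) ↔
        z ∈ l ∧ v ≤ b z := by
    simp [mem_mergeSort]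
  constructor
  · rintro ⟨l, -, hy, hprec⟩
    refine or_iff_not_imp_left.mpr fun hby => ?_
    have hy' := mem_output.mpr ⟨hy, not_not.mp hby⟩
    exact ⟨(mem_output.mp (AlwaysPrecedes.mem hprec hy')).2,
      (pairwise_mergeSort_on a _).rel_of_alwaysPrecedes hprec hy'⟩
  · refine fun h => ⟨[x, y], by simp, by simp, ?_⟩
    by_cases hby : v ≤ b y
    · obtain ⟨hbx, haxy⟩ := h.resolve_left (not_not.mpr hby)
      have output_eq :
          ([x, y].filter fun z => decide (v ≤ b z)).mergeSort (fun p q => decide (a p ≤ a q)) =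
            [x, y] := by
        rw [filter_eq_self.mpr (by simp [hbx, hby]), mergeSort_of_pairwise (by simpa using haxy)]
      show AlwaysPrecedes _ x y
      rw [output_eq]
      exact alwaysPrecedes_pair hxy
    · exact alwaysPrecedes_of_not_mem (fun hy => hby (mem_output.mp hy).2) x
end

section
/- Replacing a missing filter by satisficing: for any function P : List X → List X that commutes with filter_{a ≥ v} (i.e., P ∘ filter_{a ≥ v} = filter_{a ≥ v} ∘ P), and any list l such that filter_{a ≥ v}(P(l)) is nonempty, the head of (P ∘ filter_{a ≥ v})(l) equals the result of the satisficing procedure ξ_S applied to P(l), where S = {x : a(x) ≥ v}. -/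
/-- The satisficing procedure: scan the list until a satisfactory element is found;
if none is found, the last element is chosen (`none` on the empty list). -/
def xi {X : Type*} (S : X → Bool) : List X → Option X
  | [] => none
  | [x] => some x
  | x :: y :: xs => if S x then some x else xi S (y :: xs)

lemma xi_eq_head_filter {X : Type*} (S : X → Bool) (m : List X)
    (h : m.filter S ≠ []) : (m.filter S).head? = xi S m := by
  induction m with
  | nil => simp [List.filter] at h
  | cons x xs ih =>
    cases xs with
    | nil =>
      simp only [List.filter] at h ⊢
      cases hx : S x <;> simp [hx, xi] at h ⊢
    | cons y ys =>
      simp only [List.filter, xi] at h ⊢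
      cases hx : S x <;> simp [hx] at h ⊢ <;> exact ih h

theorem satisficing_replaces_filter {X V : Type*} [LinearOrder V] (a : X → V) (v : V)
    (P : List X → List X)
    (hcomm : ∀ l, P (List.filter (fun x => decide (v ≤ a x)) l)
      = List.filter (fun x => decide (v ≤ a x)) (P l))
    (l : List X)
    (hne : List.filter (fun x => decide (v ≤ a x)) (P l) ≠ []) :
    (P (List.filter (fun x => decide (v ≤ a x)) l)).head?
      = xi (fun x => decide (v ≤ a x)) (P l) := by
  rw [hcomm]
  exact xi_eq_head_filter _ _ hne
end

section
/- Let ⪰ be the preference ¬F(y) ∨ (F(x) ∧ x ⪰₀ y) with F a decidable predicate and ⪰₀ a total preorder, and let P = sort_{⪰₀} ∘ filter_F (stable sort by ⪰₀ after filtering by F). Then head(sort_{⪰₀}(filter_F(l))) is ⪰-maximal in l whenever filter_F(l) is nonempty. -/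
theorem head_sort_filter_maximal {X : Type*} (F : X → Prop) [DecidablePred F]
    (R : X → X → Prop) [DecidableRel R]
    (hcomp : ∀ x y, R x y ∨ R y x) (htrans : ∀ x y z, R x y → R y z → R x z)
    (l : List X) (hne : List.filter (fun x => decide (F x)) l ≠ []) :
    ∀ x, (List.mergeSort (List.filter (fun z => decide (F z)) l)
        (fun p q => decide (R p q))).head? = some x →
      ∀ y ∈ l, (¬ F y ∨ (F x ∧ R x y)) := by
  intro x hx y hy
  set fl := List.filter (fun z => decide (F z)) l with hfl
  have hperm : List.Perm (List.mergeSort fl (fun p q => decide (R p q))) fl :=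
    List.mergeSort_perm _ _
  have hsorted : List.Pairwise (fun p q => decide (R p q) = true)
      (List.mergeSort fl (fun p q => decide (R p q))) := by
    have := List.pairwise_mergeSort (le := fun p q => decide (R p q))
      (fun a b c h₁ h₂ => by
        simp only [decide_eq_true_eq] at *; exact htrans _ _ _ h₁ h₂)
      (fun a b => by
        simpa using hcomp a b) fl
    simpa [List.Pairwise] using this
  obtain ⟨ms, hms⟩ : ∃ ms, List.mergeSort fl (fun p q => decide (R p q)) = x :: ms := by
    cases h : List.mergeSort fl (fun p q => decide (R p q)) with
    | nil => simp [h] at hx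
    | cons a t => simp [h] at hx; exact ⟨t, by rw [hx]⟩
  have hxmem : x ∈ fl := hperm.mem_iff.mp (by simp [hms])
  have hFx : F x := by
    have := List.of_mem_filter hxmem
    simpa using this
  by_cases hFy : F y
  · right
    refine ⟨hFx, ?_⟩
    have hymem : y ∈ fl := List.mem_filter.mpr ⟨hy, by simpa⟩
    have hymem' : y ∈ x :: ms := by rw [← hms]; exact hperm.mem_iff.mpr hymem
    rcases List.mem_cons.mp hymem' with h | h
    · subst h; rcases hcomp y y with h | h <;> exact h
    · rw [hms] at hsorted
      have := (List.pairwise_cons.mp hsorted).1 y h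
      simpa using this
  · exact Or.inl hFy
end
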